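/- Let Δ ≥ 4, let G be a finite simple graph of maximum degree at most Δ, let M be the output matching of a 1-2-MinGreedy execution on G, and let M* be a maximum matching of G in normal form with respect to M. Let X be an M-augmenting path of (V, M ∪ M*) with creation step i (selected vertex u_i, matched with v_i), and suppose a degree-1 endpoint exists after creation of X, i.e. some transfer with source u_i or v_i targets an endpoint w with degree exactly 1 in G_i. Then the total number of uncanceled transfers whose source is one of the four vertices u_i, v_i, u_{i+1}, v_{i+1} (where u_{i+1}, v_{i+1} are the vertices matched at step i+1) is at most 2(Δ−2). -/
import Mathlib


namespace MinGreedy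

noncomputable section

open SimpleGraph

/-- The degree of a vertex `x` in the graph `H`. -/
def deg {V : Type} (H : SimpleGraph V) (x : V) : ℕ :=
  (H.neighborSet x).ncard

/-- `M` is a matching of `G`, given as a set of pairwise disjoint edges of `G`. -/
def IsMatchingSet {V : Type} (G : SimpleGraph V) (M : Set (Sym2 V)) : Prop :=
  M ⊆ G.edgeSet ∧ ∀ e ∈ M, ∀ f ∈ M, e ≠ f → ∀ x : V, x ∈ e → x ∉ f

/-- `M` is a maximum matching of `G`. -/
def IsMaxMatchingSet {V : Type} (G : SimpleGraph V) (M : Set (Sym2 V)) : Prop :=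
  IsMatchingSet G M ∧ ∀ N : Set (Sym2 V), IsMatchingSet G N → N.ncard ≤ M.ncard

/-- `ν G`, the maximum size of a matching of `G`. -/
def nu {V : Type} (G : SimpleGraph V) : ℕ :=
  sSup {n | ∃ M : Set (Sym2 V), IsMatchingSet G M ∧ M.ncard = n}

/-- `G` has maximum degree at most `Δ`. -/
def maxDegLE {V : Type} (G : SimpleGraph V) (Δ : ℕ) : Prop :=
  ∀ x : V, deg G x ≤ Δ

/-- An execution of a greedy matching algorithm on `G`: in step `i` (`0 ≤ i < k`) the
edge `{sel i, oth i}` of `Gs i` is picked with selected vertex `sel i`, and `Gs (i+1)`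
is obtained from `Gs i` by deleting all edges incident with `sel i` or `oth i`;
at the end `Gs k` has no edges. -/
structure GreedyExec (V : Type) (G : SimpleGraph V) where
  k : ℕ
  Gs : ℕ → SimpleGraph V
  sel : ℕ → V
  oth : ℕ → V
  init : Gs 0 = G
  adj : ∀ i < k, (Gs i).Adj (sel i) (oth i)
  step : ∀ i < k, Gs (i + 1) =
    SimpleGraph.fromEdgeSet {e | e ∈ (Gs i).edgeSet ∧ sel i ∉ e ∧ oth i ∉ e}
  final : (Gs k).edgeSet = ∅

/-- The output matching `M = {e_1, …, e_k}` of an execution. -/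
def GreedyExec.M {V : Type} {G : SimpleGraph V} (E : GreedyExec V G) : Set (Sym2 V) :=
  {e | ∃ i < E.k, e = s(E.sel i, E.oth i)}

/-- The execution is a MinGreedy execution: in each step the selected vertex has
minimum positive degree in the current graph. -/
def GreedyExec.IsMinGreedy {V : Type} {G : SimpleGraph V} (E : GreedyExec V G) : Prop :=
  ∀ i < E.k, ∀ x : V, 0 < deg (E.Gs i) x → deg (E.Gs i) (E.sel i) ≤ deg (E.Gs i) x

/-- The execution is a 1-2-MinGreedy execution: whenever the current graph has a vertex of
degree 1 or 2, the selected vertex has minimum positive degree in the current graph. -/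
def GreedyExec.Is12MinGreedy {V : Type} {G : SimpleGraph V} (E : GreedyExec V G) : Prop :=
  ∀ i < E.k, (∃ x : V, deg (E.Gs i) x = 1 ∨ deg (E.Gs i) x = 2) →
    ∀ x : V, 0 < deg (E.Gs i) x → deg (E.Gs i) (E.sel i) ≤ deg (E.Gs i) x

/-- `p 0, p 1, …, p (2m+1)` is an `M`-augmenting path: an `M`-alternating path whose
first and last edges lie in `Mopt` and whose two endpoints `p 0` and `p (2m+1)` are
not covered by `M`; it has `m` edges of `M` and `m+1` edges of `Mopt`. -/
def IsAugPath {V : Type} (M Mopt : Set (Sym2 V)) (m : ℕ) (p : ℕ → V) : Prop :=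
  (∀ i ≤ 2 * m + 1, ∀ j ≤ 2 * m + 1, p i = p j → i = j) ∧
  (∀ j ≤ 2 * m, (j % 2 = 0 → s(p j, p (j + 1)) ∈ Mopt) ∧
                (j % 2 = 1 → s(p j, p (j + 1)) ∈ M)) ∧
  (∀ e ∈ M, p 0 ∉ e ∧ p (2 * m + 1) ∉ e)

/-- The vertex set of the path `p 0, …, p (2m+1)`. -/
def pathSupp {V : Type} (m : ℕ) (p : ℕ → V) : Set V := p '' {j | j ≤ 2 * m + 1}

/-- `w` is an endpoint of an `M`-augmenting path of the graph `(V, M ∪ Mopt)`. -/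
def IsPathEndpoint {V : Type} (M Mopt : Set (Sym2 V)) (w : V) : Prop :=
  ∃ m p, IsAugPath M Mopt m p ∧ (w = p 0 ∨ w = p (2 * m + 1))

/-- `S` is the vertex set of a singleton component: a single edge of `M ∩ Mopt`. -/
def IsSingletonComp {V : Type} (M Mopt : Set (Sym2 V)) (S : Set V) : Prop :=
  ∃ x y : V, x ≠ y ∧ s(x, y) ∈ M ∧ s(x, y) ∈ Mopt ∧ S = ({x, y} : Set V)

/-- `Mopt` is a maximum matching of `G` in normal form with respect to `M`: every
(nontrivial) connected component of the graph `(V, M ∪ Mopt)` is a singleton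
(a single edge of `M ∩ Mopt`) or an `M`-augmenting path. -/
def NormalForm {V : Type} (G : SimpleGraph V) (M Mopt : Set (Sym2 V)) : Prop :=
  IsMaxMatchingSet G Mopt ∧
  ∀ C : (SimpleGraph.fromEdgeSet (M ∪ Mopt)).ConnectedComponent,
    2 ≤ C.supp.ncard →
    IsSingletonComp M Mopt C.supp ∨
    ∃ m p, IsAugPath M Mopt m p ∧ C.supp = pathSupp m p

/-- `{x, y}` is an edge of `F = E ∖ (M ∪ Mopt)`. -/
def FEdge {V : Type} (G : SimpleGraph V) (M Mopt : Set (Sym2 V)) (x y : V) : Prop :=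
  s(x, y) ∈ G.edgeSet ∧ s(x, y) ∉ M ∧ s(x, y) ∉ Mopt

/-- The number of `F`-edges incident with `x`. -/
def Fdeg {V : Type} (G : SimpleGraph V) (M Mopt : Set (Sym2 V)) (x : V) : ℕ :=
  {e : Sym2 V | e ∈ G.edgeSet ∧ e ∉ M ∧ e ∉ Mopt ∧ x ∈ e}.ncard

/-- `x` is matched at step `i` of the execution, i.e. `x ∈ e_i`. -/
def matchedAt {V : Type} {G : SimpleGraph V} (E : GreedyExec V G) (i : ℕ) (x : V) : Prop :=
  i < E.k ∧ (x = E.sel i ∨ x = E.oth i)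

/-- The `F`-edge `{v, w}` is a transfer from `v` to `w` arising at step `i`: `w` is an
endpoint of an `M`-augmenting path, `v` is matched at step `i` and the degree of `w`
in the graph after step `i` is at most 1. -/
def transferAt {V : Type} {G : SimpleGraph V} (E : GreedyExec V G)
    (M Mopt : Set (Sym2 V)) (i : ℕ) (v w : V) : Prop :=
  FEdge G M Mopt v w ∧ IsPathEndpoint M Mopt w ∧ matchedAt E i v ∧
  deg (E.Gs (i + 1)) w ≤ 1

/-- The edge `{v, w}` is a transfer from `v` to `w`. -/
def IsTransfer {V : Type} {G : SimpleGraph V} (E : GreedyExec V G)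
    (M Mopt : Set (Sym2 V)) (v w : V) : Prop :=
  ∃ i, transferAt E M Mopt i v w

/-- `(v, w)` is an uncanceled transfer arising at step `i`: it is a transfer arising at
step `i` and it is not the case that (`w` has degree exactly 1 before step `i` with its
unique incident edge being `{v, w}`, and `w` is the target of at least two uncanceled
transfers arising at steps before `i`). -/
def uncanceledAt {V : Type} {G : SimpleGraph V} (E : GreedyExec V G)
    (M Mopt : Set (Sym2 V)) (i : ℕ) : V → V → Prop :=
  Nat.strongRecOn (motive := fun _ => V → V → Prop) i (fun i ih v w =>
    transferAt E M Mopt i v w ∧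
    ¬(deg (E.Gs i) w = 1 ∧ (E.Gs i).Adj v w ∧
      ∃ (j₁ : ℕ) (h₁ : j₁ < i) (v₁ : V) (j₂ : ℕ) (h₂ : j₂ < i) (v₂ : V),
        ih j₁ h₁ v₁ w ∧ ih j₂ h₂ v₂ w ∧ (j₁, v₁) ≠ (j₂, v₂)))

/-- `(v, w)` is an uncanceled transfer. -/
def IsUncanceledTransfer {V : Type} {G : SimpleGraph V} (E : GreedyExec V G)
    (M Mopt : Set (Sym2 V)) (v w : V) : Prop :=
  ∃ i, uncanceledAt E M Mopt i v w

/-- `(v, w)` is a canceled transfer. -/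
def IsCanceledTransfer {V : Type} {G : SimpleGraph V} (E : GreedyExec V G)
    (M Mopt : Set (Sym2 V)) (v w : V) : Prop :=
  IsTransfer E M Mopt v w ∧ ¬IsUncanceledTransfer E M Mopt v w

/-- `d_X`: the number of transfers whose source lies in the vertex set `X`. -/
def debits {V : Type} {G : SimpleGraph V} (E : GreedyExec V G)
    (M Mopt : Set (Sym2 V)) (X : Set V) : ℕ :=
  {q : V × V | IsTransfer E M Mopt q.1 q.2 ∧ q.1 ∈ X}.ncard

/-- `c_X`: the number of transfers whose target lies in the vertex set `X`. -/
def credits {V : Type} {G : SimpleGraph V} (E : GreedyExec V G)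
    (M Mopt : Set (Sym2 V)) (X : Set V) : ℕ :=
  {q : V × V | IsTransfer E M Mopt q.1 q.2 ∧ q.2 ∈ X}.ncard

/-- `i` is the creation step of the component with vertex set `X`: the step in which the
first edge of `M` lying in `X` is picked. -/
def creationStep {V : Type} {G : SimpleGraph V} (E : GreedyExec V G)
    (X : Set V) (i : ℕ) : Prop :=
  i < E.k ∧ E.sel i ∈ X ∧ E.oth i ∈ X ∧ ∀ j < i, ¬(E.sel j ∈ X ∧ E.oth j ∈ X)

/-- A degree-1 endpoint exists after the creation step `i`: some transfer with source
`sel i` or `oth i` targets an endpoint `w` of degree exactly 1 after step `i`. -/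
def Deg1EndpointAfter {V : Type} {G : SimpleGraph V} (E : GreedyExec V G)
    (M Mopt : Set (Sym2 V)) (i : ℕ) : Prop :=
  ∃ v w : V, (v = E.sel i ∨ v = E.oth i) ∧ transferAt E M Mopt i v w ∧
    deg (E.Gs (i + 1)) w = 1
section Helper
variable {V : Type} {G : SimpleGraph V} (E : GreedyExec V G) (M Mopt : Set (Sym2 V))

lemma uncanceledAt_iff (i : ℕ) (v w : V) :
    uncanceledAt E M Mopt i v w ↔
      transferAt E M Mopt i v w ∧
      ¬(deg (E.Gs i) w = 1 ∧ (E.Gs i).Adj v w ∧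
        ∃ (j₁ : ℕ) (_ : j₁ < i) (v₁ : V) (j₂ : ℕ) (_ : j₂ < i) (v₂ : V),
          uncanceledAt E M Mopt j₁ v₁ w ∧ uncanceledAt E M Mopt j₂ v₂ w ∧
          (j₁, v₁) ≠ (j₂, v₂)) := by
  unfold uncanceledAt Nat.strongRecOn
  rw [WellFounded.fix_eq]

lemma Gs_edge_iff : ∀ j, j ≤ E.k → ∀ e : Sym2 V,
    (e ∈ (E.Gs j).edgeSet ↔ e ∈ G.edgeSet ∧ ∀ l, l < j → E.sel l ∉ e ∧ E.oth l ∉ e) := by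
  intro j
  induction j with
  | zero => intro _ e; simp [E.init]
  | succ n ih =>

    intro hn e
    have hnk : n < E.k := hn
    have ihe := ih (le_of_lt hnk) e
    rw [E.step n hnk]
    rw [SimpleGraph.edgeSet_fromEdgeSet]
    constructor
    · rintro ⟨⟨he, hs, ho⟩, -⟩
      obtain ⟨heG, hall⟩ := ihe.mp he
      refine ⟨heG, fun l hl => ?_⟩
      rcases Nat.lt_or_ge l n with h | h
      · exact hall l h
      · have : l = n := by omega
        subst this; exact ⟨hs, ho⟩
    · rintro ⟨heG, hall⟩
      have he : e ∈ (E.Gs n).edgeSet := ihe.mpr ⟨heG, fun l hl => hall l (by omega)⟩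
      refine ⟨⟨he, (hall n (by omega)).1, (hall n (by omega)).2⟩, ?_⟩
      exact SimpleGraph.not_isDiag_of_mem_edgeSet _ he

lemma Gs_adj_iff {j : ℕ} (hj : j ≤ E.k) (x y : V) :
    (E.Gs j).Adj x y ↔ G.Adj x y ∧
      ∀ l, l < j → ¬matchedAt E l x ∧ ¬matchedAt E l y := by
  rw [← SimpleGraph.mem_edgeSet, ← SimpleGraph.mem_edgeSet, Gs_edge_iff E j hj]
  constructor
  · rintro ⟨hG, hall⟩
    refine ⟨hG, fun l hl => ?_⟩
    obtain ⟨hs, ho⟩ := hall l hl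
    rw [Sym2.mem_iff] at hs ho
    push_neg at hs ho
    constructor
    · rintro ⟨-, h | h⟩
      · exact hs.1 h.symm
      · exact ho.1 h.symm
    · rintro ⟨-, h | h⟩
      · exact hs.2 h.symm
      · exact ho.2 h.symm
  · rintro ⟨hG, hall⟩
    refine ⟨hG, fun l hl => ?_⟩
    obtain ⟨hx, hy⟩ := hall l hl
    have hlk : l < E.k := lt_of_lt_of_le hl hj
    constructor
    · rw [Sym2.mem_iff]
      rintro (h | h)
      · exact hx ⟨hlk, Or.inl h.symm⟩
      · exact hy ⟨hlk, Or.inl h.symm⟩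
    · rw [Sym2.mem_iff]
      rintro (h | h)
      · exact hx ⟨hlk, Or.inr h.symm⟩
      · exact hy ⟨hlk, Or.inr h.symm⟩

lemma matchedAt_unique {j l : ℕ} {x : V} (hj : matchedAt E j x) (hl : matchedAt E l x) :
    j = l := by
  by_contra hne
  wlog h : j < l generalizing j l
  · exact this hl hj (Ne.symm hne) (by omega)
  have hadj := E.adj l hl.1
  rw [Gs_adj_iff E (le_of_lt hl.1)] at hadj
  obtain ⟨hs, ho⟩ := hadj.2 j h
  rcases hl.2 with h2 | h2
  · subst h2; exact hs hj
  · subst h2; exact ho hj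

lemma mem_M_iff {e : Sym2 V} : e ∈ E.M ↔ ∃ i < E.k, e = s(E.sel i, E.oth i) := Iff.rfl

lemma matched_of_mem_M {x y : V} (h : s(x, y) ∈ E.M) : ∃ j, matchedAt E j x := by
  obtain ⟨j, hj, he⟩ := h
  have : x ∈ s(E.sel j, E.oth j) := by rw [← he]; simp
  rw [Sym2.mem_iff] at this
  exact ⟨j, hj, this⟩

lemma M_unique {x y z : V} (h1 : s(x, y) ∈ E.M) (h2 : s(x, z) ∈ E.M) : y = z := by
  obtain ⟨j, hj, hej⟩ := h1
  obtain ⟨l, hl, hel⟩ := h2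
  have hxj : matchedAt E j x := by
    have : x ∈ s(E.sel j, E.oth j) := by rw [← hej]; simp
    rw [Sym2.mem_iff] at this; exact ⟨hj, this⟩
  have hxl : matchedAt E l x := by
    have : x ∈ s(E.sel l, E.oth l) := by rw [← hel]; simp
    rw [Sym2.mem_iff] at this; exact ⟨hl, this⟩
  have : j = l := matchedAt_unique E hxj hxl
  subst this
  have : s(x, y) = s(x, z) := by rw [hej, hel]
  exact (Sym2.congr_right).mp this

lemma matching_unique {N : Set (Sym2 V)} (hN : ∀ e ∈ N, ∀ f ∈ N, e ≠ f → ∀ x : V, x ∈ e → x ∉ f)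
    {x y z : V} (h1 : s(x, y) ∈ N) (h2 : s(x, z) ∈ N) : y = z := by
  by_contra hne
  have hef : s(x, y) ≠ s(x, z) := fun h => hne ((Sym2.congr_right).mp h)
  exact hN _ h1 _ h2 hef x (by simp) (by simp)

lemma endpoint_unmatched {w : V} (hw : IsPathEndpoint E.M Mopt w) {l : ℕ} :
    ¬matchedAt E l w := by
  rintro ⟨hl, hw2⟩
  obtain ⟨m, p, hp, hend⟩ := hw
  have hmem : s(E.sel l, E.oth l) ∈ E.M := ⟨l, hl, rfl⟩
  have := hp.2.2 _ hmem
  have hwmem : w ∈ s(E.sel l, E.oth l) := by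
    rw [Sym2.mem_iff]
    rcases hw2 with h | h
    · exact Or.inl h
    · exact Or.inr h
  rcases hend with h | h
  · rw [← h] at this; exact this.1 hwmem
  · rw [← h] at this; exact this.2 hwmem

lemma neighborSet_succ {j : ℕ} (hj : j < E.k) {x : V} (hx1 : x ≠ E.sel j) (hx2 : x ≠ E.oth j) :
    (E.Gs (j + 1)).neighborSet x = (E.Gs j).neighborSet x \ {E.sel j, E.oth j} := by
  ext y
  simp only [SimpleGraph.mem_neighborSet, Set.mem_diff, Set.mem_insert_iff,
    Set.mem_singleton_iff]
  rw [E.step j hj, SimpleGraph.fromEdgeSet_adj]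
  simp only [Set.mem_setOf_eq, SimpleGraph.mem_edgeSet, Sym2.mem_iff, not_or]
  constructor
  · rintro ⟨⟨ha, hs, ho⟩, -⟩
    exact ⟨ha, fun h => hs.2 h.symm, fun h => ho.2 h.symm⟩
  · rintro ⟨ha, h1, h2⟩
    exact ⟨⟨ha, ⟨fun h => hx1 h.symm, fun h => h1 h.symm⟩,
      ⟨fun h => hx2 h.symm, fun h => h2 h.symm⟩⟩, ha.ne⟩

lemma Gs_adj_mono {j : ℕ} (hj : j < E.k) {x y : V} (h : (E.Gs (j + 1)).Adj x y) :
    (E.Gs j).Adj x y := by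
  rw [Gs_adj_iff E (le_of_lt hj)]
  rw [Gs_adj_iff E (by omega : j + 1 ≤ E.k)] at h
  exact ⟨h.1, fun l hl => h.2 l (by omega)⟩

lemma Gs_adj_G {j : ℕ} (hj : j ≤ E.k) {x y : V} (h : (E.Gs j).Adj x y) : G.Adj x y :=
  ((Gs_adj_iff E hj x y).mp h).1

lemma deg_pos_of_adj {H : SimpleGraph V} [Finite V] {x y : V} (h : H.Adj x y) :
    0 < deg H x := by
  have : y ∈ H.neighborSet x := h
  have hne : (H.neighborSet x).Nonempty := ⟨y, this⟩
  rw [deg, Set.ncard_pos (Set.toFinite _)]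
  exact hne

lemma exists_adj_of_deg_pos {H : SimpleGraph V} {x : V} (h : 0 < deg H x) :
    ∃ y, H.Adj x y := by
  rw [deg] at h
  have h' : (H.neighborSet x).ncard ≠ 0 := by omega
  obtain ⟨y, hy⟩ := Set.nonempty_of_ncard_ne_zero h'
  exact ⟨y, hy⟩

lemma deg_le_deg_G [Finite V] {j : ℕ} (hj : j ≤ E.k) (x : V) :
    deg (E.Gs j) x ≤ deg G x := by
  apply Set.ncard_le_ncard _ (Set.toFinite _)
  intro y hy
  exact Gs_adj_G E hj hy

end Helper
section Count
variable {α : Type}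

lemma ncard_add_le_of_subset_diff {s t N : Set α} (h1 : s ⊆ N \ t) (h2 : t ⊆ N)
    (hN : N.Finite) : s.ncard + t.ncard ≤ N.ncard := by
  have hd : Disjoint s t := Set.disjoint_left.mpr (fun x hx => (h1 hx).2)
  have hs : s ⊆ N := fun x hx => (h1 hx).1
  calc s.ncard + t.ncard = (s ∪ t).ncard :=
        (Set.ncard_union_eq hd (hN.subset hs) (hN.subset h2)).symm
    _ ≤ N.ncard := Set.ncard_le_ncard (Set.union_subset hs h2) hN

lemma ncard_triple_le {x y z : α} {N : Set α} (hx : x ∈ N) (hy : y ∈ N) (hz : z ∈ N)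
    (hxy : x ≠ y) (hxz : x ≠ z) (hyz : y ≠ z) {s : Set α}
    (hs : s ⊆ N \ {x, y, z}) (hN : N.Finite) : s.ncard + 3 ≤ N.ncard := by
  have h3 : ({x, y, z} : Set α).ncard = 3 := by
    rw [Set.ncard_insert_of_notMem (by simp [hxy, hxz]) (Set.toFinite _),
      Set.ncard_pair hyz]
  have := ncard_add_le_of_subset_diff hs ?_ hN
  · omega
  · intro w hw
    rcases hw with h | h | h
    · exact h ▸ hx
    · exact h ▸ hy
    · exact h ▸ hz

lemma ncard_pair_le {x y : α} {N : Set α} (hx : x ∈ N) (hy : y ∈ N)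
    (hxy : x ≠ y) {s : Set α} (hs : s ⊆ N \ {x, y}) (hN : N.Finite) :
    s.ncard + 2 ≤ N.ncard := by
  have h2 : ({x, y} : Set α).ncard = 2 := Set.ncard_pair hxy
  have := ncard_add_le_of_subset_diff hs ?_ hN
  · omega
  · intro w hw
    rcases hw with h | h
    · exact h ▸ hx
    · exact h ▸ hy

lemma ncard_single_le {x : α} {N : Set α} (hx : x ∈ N) {s : Set α}
    (hs : s ⊆ N \ {x}) (hN : N.Finite) : s.ncard + 1 ≤ N.ncard := by
  have h1 : ({x} : Set α).ncard = 1 := Set.ncard_singleton x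
  have := ncard_add_le_of_subset_diff hs ?_ hN
  · omega
  · intro w hw
    have h : w = x := hw
    exact h ▸ hx

end Count
section PathHelper
variable {V : Type} {G : SimpleGraph V} (E : GreedyExec V G) (Mopt : Set (Sym2 V))
  {m : ℕ} {p : ℕ → V}

lemma path_M_edge (hp : IsAugPath E.M Mopt m p) {r : ℕ} (h1 : 1 ≤ r) (h2 : r ≤ 2 * m) :
    ∃ q, q ≤ 2 * m + 1 ∧ (q = r + 1 ∨ q + 1 = r) ∧ s(p r, p q) ∈ E.M := by
  rcases Nat.even_or_odd r with he | ho
  · have hr2 : r % 2 = 0 := Nat.even_iff.mp he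
    have h1' : (r - 1) % 2 = 1 := by omega
    have := (hp.2.1 (r - 1) (by omega)).2 h1'
    refine ⟨r - 1, by omega, Or.inr (by omega), ?_⟩
    have hreq : r - 1 + 1 = r := by omega
    rw [hreq] at this
    rw [Sym2.eq_swap]
    exact this
  · have hr2 : r % 2 = 1 := Nat.odd_iff.mp ho
    have := (hp.2.1 r (by omega)).2 hr2
    exact ⟨r + 1, by omega, Or.inl rfl, this⟩

lemma path_Mopt_edge (hp : IsAugPath E.M Mopt m p) {r : ℕ} (hr : r ≤ 2 * m + 1) :
    ∃ q, q ≤ 2 * m + 1 ∧ (q = r + 1 ∨ q + 1 = r) ∧ s(p r, p q) ∈ Mopt := by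
  rcases Nat.even_or_odd r with he | ho
  · have hr2 : r % 2 = 0 := Nat.even_iff.mp he
    have hrle : r ≤ 2 * m := by omega
    have := (hp.2.1 r hrle).1 hr2
    exact ⟨r + 1, by omega, Or.inl rfl, this⟩
  · have hr2 : r % 2 = 1 := Nat.odd_iff.mp ho
    have h1' : (r - 1) % 2 = 0 := by omega
    have := (hp.2.1 (r - 1) (by omega)).1 h1'
    refine ⟨r - 1, by omega, Or.inr (by omega), ?_⟩
    have hreq : r - 1 + 1 = r := by omega
    rw [hreq] at this
    rw [Sym2.eq_swap]
    exact this

lemma path_edge_not_both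
    (hMopt : ∀ e ∈ Mopt, ∀ f ∈ Mopt, e ≠ f → ∀ x : V, x ∈ e → x ∉ f)
    (hp : IsAugPath E.M Mopt m p) {j : ℕ} (hj : j ≤ 2 * m)
    (hM : s(p j, p (j + 1)) ∈ E.M) (hMo : s(p j, p (j + 1)) ∈ Mopt) : False := by
  rcases Nat.even_or_odd j with he | ho
  · have hj2 : j % 2 = 0 := Nat.even_iff.mp he
    rcases Nat.eq_zero_or_pos j with h0 | hpos
    · subst h0
      have := (hp.2.2 _ hM).1
      exact this (by simp)
    · have h1' : (j - 1) % 2 = 1 := by omega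
      have hprev := (hp.2.1 (j - 1) (by omega)).2 h1'
      have hreq : j - 1 + 1 = j := by omega
      rw [hreq] at hprev
      -- s(p (j-1), p j) ∈ M and s(p j, p (j+1)) ∈ M
      have h1 : s(p j, p (j - 1)) ∈ E.M := by rw [Sym2.eq_swap]; exact hprev
      have := M_unique E h1 hM
      have := hp.1 (j - 1) (by omega) (j + 1) (by omega) this
      omega
  · have hj2 : j % 2 = 1 := Nat.odd_iff.mp ho
    have hlt : j + 1 ≤ 2 * m := by omega
    have hnext := (hp.2.1 (j + 1) hlt).1 (by omega)
    -- s(p (j+1), p (j+2)) ∈ Mopt and s(p j, p (j+1)) ∈ Mopt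
    have h1 : s(p (j + 1), p j) ∈ Mopt := by rw [Sym2.eq_swap]; exact hMo
    have := matching_unique hMopt h1 hnext
    have := hp.1 j (by omega) (j + 1 + 1) (by omega) this
    omega

lemma mem_pathSupp {r : ℕ} (hr : r ≤ 2 * m + 1) : p r ∈ pathSupp m p :=
  ⟨r, hr, rfl⟩

lemma path_unmatched_early (hp : IsAugPath E.M Mopt m p) {i : ℕ}
    (hc : creationStep E (pathSupp m p) i) {r : ℕ} (hr : r ≤ 2 * m + 1)
    {j : ℕ} (hj : j < i) : ¬matchedAt E j (p r) := by
  rintro ⟨hjk, hor⟩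
  have hMe : s(E.sel j, E.oth j) ∈ E.M := ⟨j, hjk, rfl⟩
  by_cases h0 : r = 0
  · subst h0
    have := (hp.2.2 _ hMe).1
    apply this
    rw [Sym2.mem_iff]
    rcases hor with h | h
    · exact Or.inl h
    · exact Or.inr h
  by_cases hlast : r = 2 * m + 1
  · subst hlast
    have := (hp.2.2 _ hMe).2
    apply this
    rw [Sym2.mem_iff]
    rcases hor with h | h
    · exact Or.inl h
    · exact Or.inr h
  · obtain ⟨q, hq, -, hqM⟩ := path_M_edge E Mopt hp (r := r) (by omega) (by omega)
    have hz : ∃ z, s(p r, z) ∈ E.M ∧ ((z = E.sel j ∧ p r = E.oth j) ∨ (z = E.oth j ∧ p r = E.sel j)) := by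
      rcases hor with h | h
      · exact ⟨E.oth j, by rw [h]; exact hMe, Or.inr ⟨rfl, h⟩⟩
      · refine ⟨E.sel j, ?_, Or.inl ⟨rfl, h⟩⟩
        rw [h, Sym2.eq_swap]; exact hMe
    obtain ⟨z, hzM, hzor⟩ := hz
    have hzq : z = p q := M_unique E hzM hqM
    apply hc.2.2.2 j hj
    rcases hzor with ⟨h1, h2⟩ | ⟨h1, h2⟩
    · rw [← h1, ← h2, hzq]
      exact ⟨mem_pathSupp hq, mem_pathSupp hr⟩
    · rw [← h1, ← h2, hzq]
      exact ⟨mem_pathSupp hr, mem_pathSupp hq⟩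

end PathHelper
/-- if a degree-1 endpoint exists after the creation step i of a path, then
the total number of uncanceled transfers with source among the four vertices matched at
steps i and i+1 is at most 2(Δ−2). -/
theorem combined_coin_bound {V : Type} [Fintype V] (Δ : ℕ) (hΔ : 4 ≤ Δ)
    (G : SimpleGraph V) (hdeg : maxDegLE G Δ)
    (E : GreedyExec V G) (h12 : E.Is12MinGreedy)
    (Mopt : Set (Sym2 V)) (hnf : NormalForm G E.M Mopt)
    (m : ℕ) (p : ℕ → V) (hp : IsAugPath E.M Mopt m p)
    (i : ℕ) (hc : creationStep E (pathSupp m p) i)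
    (hd1 : Deg1EndpointAfter E E.M Mopt i) :
    {q : V × V | IsUncanceledTransfer E E.M Mopt q.1 q.2 ∧
      (q.1 = E.sel i ∨ q.1 = E.oth i ∨ q.1 = E.sel (i + 1) ∨ q.1 = E.oth (i + 1))}.ncard
      ≤ 2 * (Δ - 2) := by
  classical
  have hMoptMatch := hnf.1.1.2
  have hMoptG : Mopt ⊆ G.edgeSet := hnf.1.1.1
  have hik : i < E.k := hc.1
  obtain ⟨v₀, w₀, hv₀or, htr₀, hw₀⟩ := hd1
  -- basic adjacency / matching facts
  have hadj_i : (E.Gs i).Adj (E.sel i) (E.oth i) := E.adj i hik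
  have hk1 : i + 1 < E.k := by
    rcases Nat.lt_or_ge (i+1) E.k with h | h
    · exact h
    · exfalso
      have hik1 : i + 1 = E.k := by omega
      obtain ⟨y, hy⟩ := exists_adj_of_deg_pos (H := E.Gs (i+1)) (x := w₀) (by omega)
      rw [hik1] at hy
      have : s(w₀, y) ∈ (E.Gs E.k).edgeSet := hy
      rw [E.final] at this
      exact this
  have hadj_1 : (E.Gs (i+1)).Adj (E.sel (i+1)) (E.oth (i+1)) := E.adj _ hk1
  have hmu : matchedAt E i (E.sel i) := ⟨hik, Or.inl rfl⟩
  have hmv : matchedAt E i (E.oth i) := ⟨hik, Or.inr rfl⟩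
  have hmu' : matchedAt E (i+1) (E.sel (i+1)) := ⟨hk1, Or.inl rfl⟩
  have hmv' : matchedAt E (i+1) (E.oth (i+1)) := ⟨hk1, Or.inr rfl⟩
  have huv : E.sel i ≠ E.oth i := hadj_i.ne
  have hu'v' : E.sel (i+1) ≠ E.oth (i+1) := hadj_1.ne
  have huu' : E.sel i ≠ E.sel (i+1) := fun h => by
    have := matchedAt_unique E hmu (h ▸ hmu'); omega
  have huv' : E.sel i ≠ E.oth (i+1) := fun h => by
    have := matchedAt_unique E hmu (h ▸ hmv'); omega
  have hvu' : E.oth i ≠ E.sel (i+1) := fun h => by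
    have := matchedAt_unique E hmv (h ▸ hmu'); omega
  have hvv' : E.oth i ≠ E.oth (i+1) := fun h => by
    have := matchedAt_unique E hmv (h ▸ hmv'); omega
  -- the selected vertex of step i+1 has degree one
  have hdu' : deg (E.Gs (i+1)) (E.sel (i+1)) = 1 := by
    have hle := h12 (i+1) hk1 ⟨w₀, Or.inl hw₀⟩ w₀ (by rw [hw₀]; omega)
    have hpos := deg_pos_of_adj hadj_1
    omega
  have hNu' : (E.Gs (i+1)).neighborSet (E.sel (i+1)) = {E.oth (i+1)} := by
    symm
    apply Set.eq_of_subset_of_ncard_le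
    · intro y hy
      rw [Set.mem_singleton_iff] at hy
      subst hy
      exact hadj_1
    · rw [Set.ncard_singleton]
      exact le_of_eq hdu'
    · exact Set.toFinite _
  -- path indices for u and v, and their Mopt-partners mu, mv
  obtain ⟨a, ha, hua⟩ := hc.2.1
  simp only [Set.mem_setOf_eq] at ha
  have hMuv : s(E.sel i, E.oth i) ∈ E.M := ⟨i, hik, rfl⟩
  have hnota0 : a ≠ 0 := by
    intro h; subst h
    exact (hp.2.2 _ hMuv).1 (by rw [← hua]; simp)
  have hnotalast : a ≠ 2 * m + 1 := by
    intro h; subst h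
    exact (hp.2.2 _ hMuv).2 (by rw [← hua]; simp)
  obtain ⟨b, hble, hbrel, hbM⟩ := path_M_edge E Mopt hp (r := a) (by omega) (by omega)
  have hvb : E.oth i = p b := by
    apply M_unique E (x := E.sel i)
    · exact hMuv
    · rw [← hua]; exact hbM
  have hnotb0 : b ≠ 0 := by
    intro h; subst h
    exact (hp.2.2 _ hMuv).1 (by rw [hvb]; simp)
  have hnotblast : b ≠ 2 * m + 1 := by
    intro h; subst h
    exact (hp.2.2 _ hMuv).2 (by rw [hvb]; simp)
  obtain ⟨c, hcle, hcrel, hcMo⟩ := path_Mopt_edge E Mopt hp (r := a) (by omega)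
  obtain ⟨d, hdle, hdrel, hdMo⟩ := path_Mopt_edge E Mopt hp (r := b) (by omega)
  have hMuMopt : s(E.sel i, p c) ∈ Mopt := by rw [← hua]; exact hcMo
  have hMvMopt : s(E.oth i, p d) ∈ Mopt := by rw [hvb]; exact hdMo
  have hedge_both_false : ∀ r q : ℕ, r ≤ 2 * m + 1 → q ≤ 2 * m + 1 →
      (q = r + 1 ∨ q + 1 = r) → s(p r, p q) ∈ E.M → s(p r, p q) ∈ Mopt → False := by
    intro r q hrle hqle hrel hM hMo
    rcases hrel with h | h
    · subst h
      exact path_edge_not_both E Mopt hMoptMatch hp (by omega) hM hMo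
    · have : r = q + 1 := by omega
      subst this
      rw [Sym2.eq_swap] at hM hMo
      exact path_edge_not_both E Mopt hMoptMatch hp (by omega) hM hMo
  have hmune : p c ≠ E.oth i := by
    intro h
    have hcb : c = b := hp.1 c hcle b hble (by rw [h, hvb])
    exact hedge_both_false a b ha hble hbrel hbM (hcb ▸ hcMo)
  have hmvne : p d ≠ E.sel i := by
    intro h
    have hda : d = a := hp.1 d hdle a ha (by rw [h, hua])
    have hbM' : s(p b, p a) ∈ E.M := by rw [Sym2.eq_swap]; exact hbM
    exact hedge_both_false b a hble ha (by omega) hbM' (hda ▸ hdMo)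
  have hearly : ∀ r, r ≤ 2 * m + 1 → ∀ j, j < i → ¬matchedAt E j (p r) :=
    fun r hr j hj => path_unmatched_early E Mopt hp hc hr hj
  have hmuG : G.Adj (E.sel i) (p c) := hMoptG hMuMopt
  have hmvG : G.Adj (E.oth i) (p d) := hMoptG hMvMopt
  have hself_early : ∀ t z, matchedAt E t z → ∀ l, l < t → ¬matchedAt E l z := by
    intro t z htz l hl hm
    have := matchedAt_unique E hm htz; omega
  have hadj_at : ∀ t z w, t ≤ E.k → matchedAt E t z → (∀ l, l < t → ¬matchedAt E l w) →
      G.Adj z w → (E.Gs t).Adj z w := by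
    intro t z w ht htz hw hG
    rw [Gs_adj_iff E ht]
    exact ⟨hG, fun l hl => ⟨hself_early t z htz l hl, hw l hl⟩⟩
  have hmu_adj : (E.Gs i).Adj (E.sel i) (p c) :=
    hadj_at i (E.sel i) (p c) (le_of_lt hik) hmu (fun l hl => hearly c hcle l hl) hmuG
  have hmv_adj : (E.Gs i).Adj (E.oth i) (p d) :=
    hadj_at i (E.oth i) (p d) (le_of_lt hik) hmv (fun l hl => hearly d hdle l hl) hmvG
  -- the four target sets
  set Tu := {w | IsUncanceledTransfer E E.M Mopt (E.sel i) w} with hTu_def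
  set Tv := {w | IsUncanceledTransfer E E.M Mopt (E.oth i) w} with hTv_def
  set Tu' := {w | IsUncanceledTransfer E E.M Mopt (E.sel (i+1)) w} with hTu'_def
  set Tv' := {w | IsUncanceledTransfer E E.M Mopt (E.oth (i+1)) w} with hTv'_def
  have hstep_unique : ∀ t z w, matchedAt E t z → IsUncanceledTransfer E E.M Mopt z w →
      uncanceledAt E E.M Mopt t z w := by
    rintro t z w htz ⟨j, hj⟩
    have htr := ((uncanceledAt_iff E E.M Mopt j z w).mp hj).1
    have hjt : j = t := matchedAt_unique E htr.2.2.1 htz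
    rwa [hjt] at hj
  have htgt : ∀ t z w, uncanceledAt E E.M Mopt t z w →
      (∀ l, ¬matchedAt E l w) ∧ FEdge G E.M Mopt z w ∧ deg (E.Gs (t+1)) w ≤ 1 := by
    intro t z w h
    have htr := ((uncanceledAt_iff E E.M Mopt t z w).mp h).1
    exact ⟨fun l => endpoint_unmatched E Mopt htr.2.1, htr.1, htr.2.2.2⟩
  have hFadj : ∀ z w, FEdge G E.M Mopt z w → G.Adj z w := by
    intro z w hF
    exact hF.1
  have htgt_adj : ∀ t z w, t ≤ E.k → matchedAt E t z → uncanceledAt E E.M Mopt t z w →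
      (E.Gs t).Adj z w := by
    intro t z w ht htz h
    obtain ⟨hwun, hF, -⟩ := htgt t z w h
    exact hadj_at t z w ht htz (fun l _ => hwun l) (hFadj _ _ hF)
  have hinj : ∀ z : V, Function.Injective (Prod.mk z : V → V × V) := by
    intro z a b h
    exact congrArg Prod.snd h
  have hgoal_sub : {q : V × V | IsUncanceledTransfer E E.M Mopt q.1 q.2 ∧
      (q.1 = E.sel i ∨ q.1 = E.oth i ∨ q.1 = E.sel (i + 1) ∨ q.1 = E.oth (i + 1))} ⊆
      ((Prod.mk (E.sel i) '' Tu) ∪ (Prod.mk (E.oth i) '' Tv)) ∪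
      ((Prod.mk (E.sel (i+1)) '' Tu') ∪ (Prod.mk (E.oth (i+1)) '' Tv')) := by
    rintro ⟨z, w⟩ hq
    simp only [Set.mem_setOf_eq] at hq
    obtain ⟨hzw, hor⟩ := hq
    rcases hor with h | h | h | h <;> subst h
    · exact Or.inl (Or.inl ⟨w, hzw, rfl⟩)
    · exact Or.inl (Or.inr ⟨w, hzw, rfl⟩)
    · exact Or.inr (Or.inl ⟨w, hzw, rfl⟩)
    · exact Or.inr (Or.inr ⟨w, hzw, rfl⟩)
  have hgoal_le : {q : V × V | IsUncanceledTransfer E E.M Mopt q.1 q.2 ∧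
      (q.1 = E.sel i ∨ q.1 = E.oth i ∨ q.1 = E.sel (i + 1) ∨ q.1 = E.oth (i + 1))}.ncard ≤
      Tu.ncard + Tv.ncard + Tu'.ncard + Tv'.ncard := by
    calc _ ≤ (((Prod.mk (E.sel i) '' Tu) ∪ (Prod.mk (E.oth i) '' Tv)) ∪
        ((Prod.mk (E.sel (i+1)) '' Tu') ∪ (Prod.mk (E.oth (i+1)) '' Tv'))).ncard :=
          Set.ncard_le_ncard hgoal_sub (Set.toFinite _)
      _ ≤ ((Prod.mk (E.sel i) '' Tu) ∪ (Prod.mk (E.oth i) '' Tv)).ncard +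
          ((Prod.mk (E.sel (i+1)) '' Tu') ∪ (Prod.mk (E.oth (i+1)) '' Tv')).ncard :=
          Set.ncard_union_le _ _
      _ ≤ ((Prod.mk (E.sel i) '' Tu).ncard + (Prod.mk (E.oth i) '' Tv).ncard) +
          ((Prod.mk (E.sel (i+1)) '' Tu').ncard + (Prod.mk (E.oth (i+1)) '' Tv').ncard) :=
          Nat.add_le_add (Set.ncard_union_le _ _) (Set.ncard_union_le _ _)
      _ = Tu.ncard + Tv.ncard + Tu'.ncard + Tv'.ncard := by
          rw [Set.ncard_image_of_injective _ (hinj _), Set.ncard_image_of_injective _ (hinj _),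
            Set.ncard_image_of_injective _ (hinj _), Set.ncard_image_of_injective _ (hinj _)]
          ring
  -- step i+1 selected vertex gives no transfers
  have hTu'_empty : Tu' = ∅ := by
    ext w
    simp only [hTu'_def, Set.mem_setOf_eq, Set.mem_empty_iff_false, iff_false]
    intro hw
    have hw' := hstep_unique (i+1) _ w hmu' hw
    obtain ⟨hwun, -, -⟩ := htgt _ _ _ hw'
    have hadj := htgt_adj (i+1) _ w (le_of_lt hk1) hmu' hw'
    have : w ∈ (E.Gs (i+1)).neighborSet (E.sel (i+1)) := hadj
    rw [hNu', Set.mem_singleton_iff] at this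
    subst this
    exact hwun (i+1) hmv'
  -- target subsets
  have hTu_sub : Tu ⊆ (E.Gs i).neighborSet (E.sel i) \ {E.oth i, p c} := by
    intro w hw
    have hw' := hstep_unique i _ w hmu hw
    obtain ⟨hwun, hF, -⟩ := htgt _ _ _ hw'
    have hadj := htgt_adj i _ w (le_of_lt hik) hmu hw'
    refine ⟨hadj, ?_⟩
    simp only [Set.mem_insert_iff, Set.mem_singleton_iff, not_or]
    constructor
    · intro h; subst h; exact hwun i hmv
    · intro h; subst h; exact hF.2.2 hMuMopt
  have hTv_sub : Tv ⊆ (E.Gs i).neighborSet (E.oth i) \ {E.sel i, p d} := by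
    intro w hw
    have hw' := hstep_unique i _ w hmv hw
    obtain ⟨hwun, hF, -⟩ := htgt _ _ _ hw'
    have hadj := htgt_adj i _ w (le_of_lt hik) hmv hw'
    refine ⟨hadj, ?_⟩
    simp only [Set.mem_insert_iff, Set.mem_singleton_iff, not_or]
    constructor
    · intro h; subst h; exact hwun i hmu
    · intro h; subst h; exact hF.2.2 hMvMopt
  have hTv'_sub : Tv' ⊆ (E.Gs (i+1)).neighborSet (E.oth (i+1)) \ {E.sel (i+1)} := by
    intro w hw
    have hw' := hstep_unique (i+1) _ w hmv' hw
    obtain ⟨hwun, hF, -⟩ := htgt _ _ _ hw'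
    have hadj := htgt_adj (i+1) _ w (le_of_lt hk1) hmv' hw'
    refine ⟨hadj, ?_⟩
    simp only [Set.mem_singleton_iff]
    intro h; subst h; exact hwun (i+1) hmu'
  -- properties of targets of v' = oth (i+1)
  have hS_prop : ∀ w ∈ Tv', deg (E.Gs (i+1)) w ≤ 2 ∧ (E.Gs (i+1)).Adj (E.oth (i+1)) w ∧
      (∀ l, ¬matchedAt E l w) ∧ IsPathEndpoint E.M Mopt w ∧ FEdge G E.M Mopt (E.oth (i+1)) w := by
    intro w hw
    have hw' := hstep_unique (i+1) _ w hmv' hw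
    have htr := ((uncanceledAt_iff E E.M Mopt (i+1) _ w).mp hw').1
    obtain ⟨hwun, hF, hdeg1⟩ := htgt _ _ _ hw'
    have hadj := htgt_adj (i+1) _ w (le_of_lt hk1) hmv' hw'
    refine ⟨?_, hadj, hwun, htr.2.1, hF⟩
    have hwne1 : w ≠ E.sel (i+1) := fun h => hwun (i+1) (h ▸ hmu')
    have hwne2 : w ≠ E.oth (i+1) := fun h => hwun (i+1) (h ▸ hmv')
    have hstep := neighborSet_succ E hk1 (x := w) hwne1 hwne2
    have hsub : (E.Gs (i+1)).neighborSet w ⊆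
        insert (E.oth (i+1)) ((E.Gs (i+1+1)).neighborSet w) := by
      intro y hy
      by_cases hy1 : y = E.sel (i+1)
      · exfalso
        subst hy1
        have : w ∈ (E.Gs (i+1)).neighborSet (E.sel (i+1)) := hy.symm
        rw [hNu', Set.mem_singleton_iff] at this
        exact hwne2 this
      by_cases hy2 : y = E.oth (i+1)
      · exact Or.inl hy2
      · refine Or.inr ?_
        rw [hstep]
        simp only [Set.mem_diff, Set.mem_insert_iff, Set.mem_singleton_iff]
        exact ⟨hy, by tauto⟩
    calc deg (E.Gs (i+1)) w ≤ (insert (E.oth (i+1)) ((E.Gs (i+1+1)).neighborSet w)).ncard :=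
          Set.ncard_le_ncard hsub (Set.toFinite _)
      _ ≤ ((E.Gs (i+1+1)).neighborSet w).ncard + 1 := Set.ncard_insert_le _ _
      _ ≤ 2 := by
          have : deg (E.Gs (i+1+1)) w ≤ 1 := hdeg1
          rw [deg] at this
          omega
  have hT_unm : ∀ z w, IsUncanceledTransfer E E.M Mopt z w → ∀ l, ¬matchedAt E l w := by
    rintro z w ⟨j, hj⟩ l
    exact endpoint_unmatched E Mopt (((uncanceledAt_iff E E.M Mopt j z w).mp hj).1).2.1
  have hdeg_le : ∀ j, j ≤ E.k → ∀ x, deg (E.Gs j) x ≤ Δ :=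
    fun j hj x => le_trans (deg_le_deg_G E hj x) (hdeg x)
  have hTu_le : Tu.ncard + 2 ≤ deg (E.Gs i) (E.sel i) :=
    ncard_pair_le hadj_i hmu_adj (fun h => hmune h.symm) hTu_sub (Set.toFinite _)
  have hTv_le : Tv.ncard + 2 ≤ deg (E.Gs i) (E.oth i) :=
    ncard_pair_le hadj_i.symm hmv_adj (fun h => hmvne h.symm) hTv_sub (Set.toFinite _)
  have hS_le : Tv'.ncard + 1 ≤ deg (E.Gs (i+1)) (E.oth (i+1)) :=
    ncard_single_le hadj_1.symm hTv'_sub (Set.toFinite _)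
  refine le_trans hgoal_le ?_
  rw [hTu'_empty, Set.ncard_empty]
  by_cases hlow : ∃ x, deg (E.Gs i) x = 1 ∨ deg (E.Gs i) x = 2
  · -- CASE II : a vertex of degree one or two exists at step i
    have hminrule := h12 i hik hlow
    have hA_le2 : deg (E.Gs i) (E.sel i) ≤ 2 := by
      obtain ⟨x, hx⟩ := hlow
      have hpos : 0 < deg (E.Gs i) x := by rcases hx with h | h <;> omega
      have := hminrule x hpos
      rcases hx with h | h <;> omega
    have hNu_eq : (E.Gs i).neighborSet (E.sel i) = {E.oth i, p c} := by
      symm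
      apply Set.eq_of_subset_of_ncard_le
      · intro y hy
        rcases hy with h | h
        · exact h ▸ hadj_i
        · have : y = p c := h
          exact this ▸ hmu_adj
      · calc ((E.Gs i).neighborSet (E.sel i)).ncard = deg (E.Gs i) (E.sel i) := rfl
          _ ≤ 2 := hA_le2
          _ = ({E.oth i, p c} : Set V).ncard := (Set.ncard_pair (fun h => hmune h.symm)).symm
      · exact Set.toFinite _
    have hTu_empty : Tu.ncard = 0 := by
      have hsub : Tu ⊆ (∅ : Set V) := by
        intro w hw
        have := hTu_sub hw
        rw [hNu_eq, Set.diff_self] at this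
        exact this
      rw [Set.eq_empty_of_subset_empty hsub, Set.ncard_empty]
    have hmin_all : ∀ x, 0 < deg (E.Gs i) x → 2 ≤ deg (E.Gs i) x := by
      intro x hx
      have h2 : 2 ≤ deg (E.Gs i) (E.sel i) := by
        show 2 ≤ ((E.Gs i).neighborSet (E.sel i)).ncard
        rw [hNu_eq, Set.ncard_pair (fun h => hmune h.symm)]
      exact le_trans h2 (hminrule x hx)
    by_cases ha'Δ : deg (E.Gs (i+1)) (E.oth (i+1)) = Δ
    · -- v' has full degree at step i+1
      have hNv'eq : (E.Gs (i+1)).neighborSet (E.oth (i+1)) = G.neighborSet (E.oth (i+1)) := by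
        apply Set.eq_of_subset_of_ncard_le
        · intro y hy
          exact Gs_adj_G E (le_of_lt hk1) hy
        · calc (G.neighborSet (E.oth (i+1))).ncard = deg G (E.oth (i+1)) := rfl
            _ ≤ Δ := hdeg _
            _ = deg (E.Gs (i+1)) (E.oth (i+1)) := ha'Δ.symm
            _ = _ := rfl
        · exact Set.toFinite _
      have hMu'v' : s(E.sel (i+1), E.oth (i+1)) ∈ E.M := ⟨i+1, hk1, rfl⟩
      obtain ⟨x', hx'Mo⟩ : ∃ x', s(E.oth (i+1), x') ∈ Mopt := by
        have hadjH : (SimpleGraph.fromEdgeSet (E.M ∪ Mopt)).Adj (E.sel (i+1)) (E.oth (i+1)) := by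
          rw [SimpleGraph.fromEdgeSet_adj]
          exact ⟨Or.inl hMu'v', hu'v'⟩
        set C := (SimpleGraph.fromEdgeSet (E.M ∪ Mopt)).connectedComponentMk (E.oth (i+1)) with hC
        have hv'C : E.oth (i+1) ∈ C.supp := by
          rw [SimpleGraph.ConnectedComponent.mem_supp_iff]
        have hu'C : E.sel (i+1) ∈ C.supp := by
          rw [SimpleGraph.ConnectedComponent.mem_supp_iff, hC]
          exact SimpleGraph.ConnectedComponent.sound hadjH.reachable
        have h2le : 2 ≤ C.supp.ncard := by
          calc 2 = ({E.sel (i+1), E.oth (i+1)} : Set V).ncard := (Set.ncard_pair hu'v').symm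
            _ ≤ C.supp.ncard := by
              apply Set.ncard_le_ncard _ (Set.toFinite _)
              intro y hy
              rcases hy with h | h
              · exact h ▸ hu'C
              · have : y = E.oth (i+1) := h
                exact this ▸ hv'C
        rcases hnf.2 C h2le with hsing | hpath
        · obtain ⟨x, y, hxy, hMx, hMox, hsupp⟩ := hsing
          rw [hsupp] at hv'C
          rcases hv'C with h | h
          · exact ⟨y, h ▸ hMox⟩
          · have h : E.oth (i+1) = y := h
            refine ⟨x, ?_⟩
            rw [Sym2.eq_swap]
            exact h ▸ hMox
        · obtain ⟨mq, q, hq, hsuppq⟩ := hpath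
          rw [hsuppq] at hv'C
          obtain ⟨s', hs', hsv⟩ := hv'C
          simp only [Set.mem_setOf_eq] at hs'
          obtain ⟨t', _, _, hMo⟩ := path_Mopt_edge E Mopt hq (r := s') hs'
          exact ⟨q t', hsv ▸ hMo⟩
      by_cases hx'u' : x' = E.sel (i+1)
      · -- the Mopt partner of v' is u' itself
        have hu'pos : 0 < deg (E.Gs i) (E.sel (i+1)) :=
          deg_pos_of_adj (Gs_adj_mono E hik hadj_1)
        have hu'2 : 2 ≤ deg (E.Gs i) (E.sel (i+1)) := hmin_all _ hu'pos
        have hNsub : (E.Gs i).neighborSet (E.sel (i+1)) ⊆ {E.oth (i+1), E.sel i, E.oth i} := by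
          intro y hy
          by_cases h1 : y = E.sel i
          · exact Or.inr (Or.inl h1)
          by_cases h2 : y = E.oth i
          · exact Or.inr (Or.inr h2)
          · left
            have hstep := neighborSet_succ E hik (x := E.sel (i+1)) huu'.symm hvu'.symm
            have : y ∈ (E.Gs (i+1)).neighborSet (E.sel (i+1)) := by
              rw [hstep]
              exact ⟨hy, by simp [h1, h2]⟩
            rw [hNu'] at this
            exact this
        have hor : E.sel i ∈ (E.Gs i).neighborSet (E.sel (i+1)) ∨
            E.oth i ∈ (E.Gs i).neighborSet (E.sel (i+1)) := by
          by_contra hcon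
          push_neg at hcon
          have hsub1 : (E.Gs i).neighborSet (E.sel (i+1)) ⊆ {E.oth (i+1)} := by
            intro y hy
            rcases hNsub hy with h | h | h
            · exact h
            · exact absurd (h ▸ hy) hcon.1
            · exact absurd (h ▸ hy) hcon.2
          have := Set.ncard_le_ncard hsub1 (Set.toFinite _)
          rw [Set.ncard_singleton] at this
          have : deg (E.Gs i) (E.sel (i+1)) ≤ 1 := this
          omega
        rcases hor with hadj_u'u | hadj_u'v
        · exfalso
          have hmem : E.sel (i+1) ∈ (E.Gs i).neighborSet (E.sel i) :=
            (SimpleGraph.mem_neighborSet _ _ _).mpr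
              ((SimpleGraph.mem_neighborSet _ _ _).mp hadj_u'u).symm
          rw [hNu_eq] at hmem
          rcases hmem with h | h
          · exact hvu' h.symm
          · -- sel (i+1) = p c : Mopt uniqueness contradiction
            have h : E.sel (i+1) = p c := h
            have h1 : s(p c, E.sel i) ∈ Mopt := by rw [Sym2.eq_swap]; exact hMuMopt
            have h2 : s(p c, E.oth (i+1)) ∈ Mopt := by
              rw [← h, Sym2.eq_swap]
              exact hx'u' ▸ hx'Mo
            exact huv' (matching_unique hMoptMatch h1 h2)
        · -- u' is a neighbor of v = oth i : count Tv with three exclusions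
          have hu'mem : E.sel (i+1) ∈ (E.Gs i).neighborSet (E.oth i) :=
            (SimpleGraph.mem_neighborSet _ _ _).mpr
              ((SimpleGraph.mem_neighborSet _ _ _).mp hadj_u'v).symm
          have hu'ne_pd : E.sel (i+1) ≠ p d := by
            intro h
            have h1 : s(p d, E.oth i) ∈ Mopt := by rw [Sym2.eq_swap]; exact hMvMopt
            have h2 : s(p d, E.oth (i+1)) ∈ Mopt := by
              rw [← h, Sym2.eq_swap]
              exact hx'u' ▸ hx'Mo
            exact hvv' (matching_unique hMoptMatch h1 h2)
          have hTv3 : Tv.ncard + 3 ≤ deg (E.Gs i) (E.oth i) := by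
            apply ncard_triple_le hadj_i.symm hmv_adj hu'mem
              (fun h => hmvne h.symm) huu' hu'ne_pd.symm _ (Set.toFinite _)
            intro w hw
            obtain ⟨hN, hnot⟩ := hTv_sub hw
            simp only [Set.mem_insert_iff, Set.mem_singleton_iff, not_or] at hnot
            refine ⟨hN, ?_⟩
            simp only [Set.mem_insert_iff, Set.mem_singleton_iff, not_or]
            exact ⟨hnot.1, hnot.2, fun h => hT_unm _ w hw (i+1) (h ▸ hmu')⟩
          have h1 : deg (E.Gs i) (E.oth i) ≤ Δ := hdeg_le i (le_of_lt hik) _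
          omega
      · -- the Mopt partner x' of v' is distinct from u'
        have hx'G : G.Adj (E.oth (i+1)) x' := hMoptG hx'Mo
        have hx'N : x' ∈ (E.Gs (i+1)).neighborSet (E.oth (i+1)) := by
          rw [hNv'eq]
          exact hx'G
        have hS2 : Tv'.ncard + 2 ≤ deg (E.Gs (i+1)) (E.oth (i+1)) := by
          apply ncard_pair_le hadj_1.symm hx'N (fun h => hx'u' h.symm) _ (Set.toFinite _)
          intro w hw
          obtain ⟨hN, hnot⟩ := hTv'_sub hw
          refine ⟨hN, ?_⟩
          simp only [Set.mem_insert_iff, Set.mem_singleton_iff, not_or]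
          refine ⟨hnot, ?_⟩
          intro h
          exact ((hS_prop w hw).2.2.2.2).2.2 (h ▸ hx'Mo)
        have h1 : deg (E.Gs (i+1)) (E.oth (i+1)) ≤ Δ := hdeg_le (i+1) (le_of_lt hk1) _
        have h2 : deg (E.Gs i) (E.oth i) ≤ Δ := hdeg_le i (le_of_lt hik) _
        omega
    · -- v' does not have full degree at step i+1
      have h1 : deg (E.Gs (i+1)) (E.oth (i+1)) ≤ Δ := hdeg_le (i+1) (le_of_lt hk1) _
      have h2 : deg (E.Gs i) (E.oth i) ≤ Δ := hdeg_le i (le_of_lt hik) _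
      have h3 : deg (E.Gs (i+1)) (E.oth (i+1)) < Δ := lt_of_le_of_ne h1 ha'Δ
      omega
  · -- CASE I : all positive degrees at step i are at least three
    have hge3 : ∀ x, 0 < deg (E.Gs i) x → 3 ≤ deg (E.Gs i) x := by
      intro x hx
      have h := not_or.mp (not_exists.mp hlow x)
      omega
    -- u' = sel (i+1) is adjacent to both sel i and oth i in Gs i
    have hu'adj_i : (E.Gs i).Adj (E.sel (i+1)) (E.oth (i+1)) := Gs_adj_mono E hik hadj_1
    have hu'3 : 3 ≤ deg (E.Gs i) (E.sel (i+1)) := hge3 _ (deg_pos_of_adj hu'adj_i)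
    have hNsub : (E.Gs i).neighborSet (E.sel (i+1)) ⊆ {E.oth (i+1), E.sel i, E.oth i} := by
      intro y hy
      by_cases h1 : y = E.sel i
      · exact Or.inr (Or.inl h1)
      by_cases h2 : y = E.oth i
      · exact Or.inr (Or.inr h2)
      · left
        have hstep := neighborSet_succ E hik (x := E.sel (i+1)) huu'.symm hvu'.symm
        have : y ∈ (E.Gs (i+1)).neighborSet (E.sel (i+1)) := by
          rw [hstep]
          exact ⟨hy, by simp [h1, h2]⟩
        rw [hNu'] at this
        exact this
    have hu'u : (E.Gs i).Adj (E.sel i) (E.sel (i+1)) := by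
      by_contra hcon
      have hsub1 : (E.Gs i).neighborSet (E.sel (i+1)) ⊆ {E.oth (i+1), E.oth i} := by
        intro y hy
        rcases hNsub hy with h | h | h
        · exact Or.inl h
        · exact absurd ((h ▸ hy : (E.Gs i).Adj (E.sel (i+1)) (E.sel i)).symm) hcon
        · exact Or.inr h
      have hle := Set.ncard_le_ncard hsub1 (Set.toFinite _)
      have h2 : ({E.oth (i+1), E.oth i} : Set V).ncard ≤ 2 := by
        apply le_trans (Set.ncard_insert_le _ _)
        rw [Set.ncard_singleton]
      have : deg (E.Gs i) (E.sel (i+1)) ≤ 2 := le_trans hle h2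
      omega
    have hu'v : (E.Gs i).Adj (E.oth i) (E.sel (i+1)) := by
      by_contra hcon
      have hsub1 : (E.Gs i).neighborSet (E.sel (i+1)) ⊆ {E.oth (i+1), E.sel i} := by
        intro y hy
        rcases hNsub hy with h | h | h
        · exact Or.inl h
        · exact Or.inr h
        · exact absurd ((h ▸ hy : (E.Gs i).Adj (E.sel (i+1)) (E.oth i)).symm) hcon
      have hle := Set.ncard_le_ncard hsub1 (Set.toFinite _)
      have h2 : ({E.oth (i+1), E.sel i} : Set V).ncard ≤ 2 := by
        apply le_trans (Set.ncard_insert_le _ _)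
        rw [Set.ncard_singleton]
      have : deg (E.Gs i) (E.sel (i+1)) ≤ 2 := le_trans hle h2
      omega
    -- every target of v' is adjacent (in Gs i) to sel i or oth i
    have hSmid : ∀ w ∈ Tv', (E.Gs i).Adj (E.sel i) w ∨ (E.Gs i).Adj (E.oth i) w := by
      intro w hw
      obtain ⟨hd2, hadjw, hwun, hend, hF⟩ := hS_prop w hw
      have hadj_w_i : (E.Gs i).Adj (E.oth (i+1)) w := Gs_adj_mono E hik hadjw
      have h3 : 3 ≤ deg (E.Gs i) w := hge3 _ (deg_pos_of_adj hadj_w_i.symm)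
      by_contra hcon
      push_neg at hcon
      have hwne1 : w ≠ E.sel i := fun h => hwun i (h ▸ hmu)
      have hwne2 : w ≠ E.oth i := fun h => hwun i (h ▸ hmv)
      have hstep := neighborSet_succ E hik (x := w) hwne1 hwne2
      have hsub1 : (E.Gs i).neighborSet w ⊆ (E.Gs (i+1)).neighborSet w := by
        intro y hy
        rw [hstep]
        refine ⟨hy, ?_⟩
        simp only [Set.mem_insert_iff, Set.mem_singleton_iff, not_or]
        constructor
        · intro h
          exact hcon.1 ((h ▸ hy : (E.Gs i).Adj w (E.sel i)).symm)
        · intro h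
          exact hcon.2 ((h ▸ hy : (E.Gs i).Adj w (E.oth i)).symm)
      have := Set.ncard_le_ncard hsub1 (Set.toFinite _)
      have : deg (E.Gs i) w ≤ deg (E.Gs (i+1)) w := this
      omega
    -- a common target of v' and sel i must be p d; of v' and oth i must be p c
    have hSTu : ∀ w ∈ Tv', w ∈ Tu → w = p d := by
      intro w hwS hwTu
      obtain ⟨hd2, hadjw, hwun, hend, hF⟩ := hS_prop w hwS
      have hu'unc := hstep_unique i _ w hmu hwTu
      obtain ⟨-, hFu, hdeg1⟩ := htgt _ _ _ hu'unc
      have hdw1 : deg (E.Gs (i+1)) w = 1 :=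
        le_antisymm hdeg1 (deg_pos_of_adj hadjw.symm)
      have hadj_u_w : (E.Gs i).Adj (E.sel i) w := htgt_adj i _ w (le_of_lt hik) hmu hu'unc
      have h3 : 3 ≤ deg (E.Gs i) w := hge3 _ (deg_pos_of_adj hadj_u_w.symm)
      have hwne1 : w ≠ E.sel i := fun h => hwun i (h ▸ hmu)
      have hwne2 : w ≠ E.oth i := fun h => hwun i (h ▸ hmv)
      have hvNw : (E.Gs i).Adj w (E.oth i) := by
        by_contra hcon
        have hstep := neighborSet_succ E hik (x := w) hwne1 hwne2
        have hsub1 : (E.Gs i).neighborSet w ⊆ insert (E.sel i) ((E.Gs (i+1)).neighborSet w) := by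
          intro y hy
          by_cases h1 : y = E.sel i
          · exact Or.inl h1
          · refine Or.inr ?_
            rw [hstep]
            refine ⟨hy, ?_⟩
            simp only [Set.mem_insert_iff, Set.mem_singleton_iff, not_or]
            exact ⟨h1, fun h => hcon (h ▸ hy)⟩
        have hle := Set.ncard_le_ncard hsub1 (Set.toFinite _)
        have h2 := Set.ncard_insert_le (E.sel i) ((E.Gs (i+1)).neighborSet w)
        have : deg (E.Gs i) w ≤ deg (E.Gs (i+1)) w + 1 := by
          calc deg (E.Gs i) w ≤ _ := hle
            _ ≤ _ + 1 := h2
        omega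
      by_cases hMo : s(E.oth i, w) ∈ Mopt
      · exact (matching_unique hMoptMatch hMvMopt hMo).symm ▸ rfl
      · exfalso
        have hGvw : G.Adj (E.oth i) w := Gs_adj_G E (le_of_lt hik) hvNw.symm
        have hnotM : s(E.oth i, w) ∉ E.M := by
          intro h
          have h' : s(w, E.oth i) ∈ E.M := by rw [Sym2.eq_swap]; exact h
          obtain ⟨j, hj⟩ := matched_of_mem_M E h'
          exact hwun j hj
        have hFv : FEdge G E.M Mopt (E.oth i) w := ⟨hGvw, hnotM, hMo⟩
        have htrv : transferAt E E.M Mopt i (E.oth i) w := ⟨hFv, hend, hmv, by omega⟩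
        have huncv : uncanceledAt E E.M Mopt i (E.oth i) w := by
          rw [uncanceledAt_iff]
          refine ⟨htrv, ?_⟩
          rintro ⟨h1, -, -⟩
          omega
        have hv'unc := hstep_unique (i+1) _ w hmv' hwS
        have hcancel := ((uncanceledAt_iff E E.M Mopt (i+1) _ w).mp hv'unc).2
        apply hcancel
        refine ⟨hdw1, hadjw, i, by omega, E.sel i, i, by omega, E.oth i, hu'unc, huncv, ?_⟩
        simp only [ne_eq, Prod.mk.injEq, not_and]
        intro _
        exact huv
    have hSTv : ∀ w ∈ Tv', w ∈ Tv → w = p c := by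
      intro w hwS hwTv
      obtain ⟨hd2, hadjw, hwun, hend, hF⟩ := hS_prop w hwS
      have hv'unc2 := hstep_unique i _ w hmv hwTv
      obtain ⟨-, hFv2, hdeg1⟩ := htgt _ _ _ hv'unc2
      have hdw1 : deg (E.Gs (i+1)) w = 1 :=
        le_antisymm hdeg1 (deg_pos_of_adj hadjw.symm)
      have hadj_v_w : (E.Gs i).Adj (E.oth i) w := htgt_adj i _ w (le_of_lt hik) hmv hv'unc2
      have h3 : 3 ≤ deg (E.Gs i) w := hge3 _ (deg_pos_of_adj hadj_v_w.symm)
      have hwne1 : w ≠ E.sel i := fun h => hwun i (h ▸ hmu)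
      have hwne2 : w ≠ E.oth i := fun h => hwun i (h ▸ hmv)
      have huNw : (E.Gs i).Adj w (E.sel i) := by
        by_contra hcon
        have hstep := neighborSet_succ E hik (x := w) hwne1 hwne2
        have hsub1 : (E.Gs i).neighborSet w ⊆ insert (E.oth i) ((E.Gs (i+1)).neighborSet w) := by
          intro y hy
          by_cases h1 : y = E.oth i
          · exact Or.inl h1
          · refine Or.inr ?_
            rw [hstep]
            refine ⟨hy, ?_⟩
            simp only [Set.mem_insert_iff, Set.mem_singleton_iff, not_or]
            exact ⟨fun h => hcon (h ▸ hy), h1⟩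
        have hle := Set.ncard_le_ncard hsub1 (Set.toFinite _)
        have h2 := Set.ncard_insert_le (E.oth i) ((E.Gs (i+1)).neighborSet w)
        have : deg (E.Gs i) w ≤ deg (E.Gs (i+1)) w + 1 := by
          calc deg (E.Gs i) w ≤ _ := hle
            _ ≤ _ + 1 := h2
        omega
      by_cases hMo : s(E.sel i, w) ∈ Mopt
      · exact (matching_unique hMoptMatch hMuMopt hMo).symm ▸ rfl
      · exfalso
        have hGuw : G.Adj (E.sel i) w := Gs_adj_G E (le_of_lt hik) huNw.symm
        have hnotM : s(E.sel i, w) ∉ E.M := by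
          intro h
          have h' : s(w, E.sel i) ∈ E.M := by rw [Sym2.eq_swap]; exact h
          obtain ⟨j, hj⟩ := matched_of_mem_M E h'
          exact hwun j hj
        have hFu2 : FEdge G E.M Mopt (E.sel i) w := ⟨hGuw, hnotM, hMo⟩
        have htru : transferAt E E.M Mopt i (E.sel i) w := ⟨hFu2, hend, hmu, by omega⟩
        have huncu : uncanceledAt E E.M Mopt i (E.sel i) w := by
          rw [uncanceledAt_iff]
          refine ⟨htru, ?_⟩
          rintro ⟨h1, -, -⟩
          omega
        have hv'unc := hstep_unique (i+1) _ w hmv' hwS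
        have hcancel := ((uncanceledAt_iff E E.M Mopt (i+1) _ w).mp hv'unc).2
        apply hcancel
        refine ⟨hdw1, hadjw, i, by omega, E.sel i, i, by omega, E.oth i, huncu, hv'unc2, ?_⟩
        simp only [ne_eq, Prod.mk.injEq, not_and]
        intro _
        exact huv
    -- partition the targets of v'
    set Su := {w | w ∈ Tv' ∧ w ∉ Tu ∧ w ∉ Tv ∧ w ≠ p c ∧ w ≠ p d ∧ (E.Gs i).Adj (E.sel i) w}
      with hSu_def
    set Sv := {w | w ∈ Tv' ∧ w ∉ Tu ∧ w ∉ Tv ∧ w ≠ p c ∧ w ≠ p d ∧ ¬(E.Gs i).Adj (E.sel i) w}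
      with hSv_def
    have hdecomp : Tv' ⊆ (Su ∪ Sv) ∪ ({p c, p d} ∩ Tv') := by
      intro w hw
      by_cases h1 : w = p c
      · exact Or.inr ⟨Or.inl h1, hw⟩
      by_cases h2 : w = p d
      · exact Or.inr ⟨Or.inr h2, hw⟩
      by_cases h3 : w ∈ Tu
      · exact absurd (hSTu w hw h3) h2
      by_cases h4 : w ∈ Tv
      · exact absurd (hSTv w hw h4) h1
      by_cases h5 : (E.Gs i).Adj (E.sel i) w
      · exact Or.inl (Or.inl ⟨hw, h3, h4, h1, h2, h5⟩)
      · exact Or.inl (Or.inr ⟨hw, h3, h4, h1, h2, h5⟩)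
    have hTv'_le2 : Tv'.ncard ≤ Su.ncard + Sv.ncard + ({p c, p d} ∩ Tv').ncard := by
      calc Tv'.ncard ≤ ((Su ∪ Sv) ∪ ({p c, p d} ∩ Tv')).ncard :=
            Set.ncard_le_ncard hdecomp (Set.toFinite _)
        _ ≤ (Su ∪ Sv).ncard + ({p c, p d} ∩ Tv').ncard := Set.ncard_union_le _ _
        _ ≤ Su.ncard + Sv.ncard + ({p c, p d} ∩ Tv').ncard := by
            have := Set.ncard_union_le Su Sv
            omega
    have hTuSu : (Tu ∪ Su).ncard = Tu.ncard + Su.ncard := by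
      apply Set.ncard_union_eq _ (Set.toFinite _) (Set.toFinite _)
      exact Set.disjoint_left.mpr (fun w hw hw2 => hw2.2.1 hw)
    have hTvSv : (Tv ∪ Sv).ncard = Tv.ncard + Sv.ncard := by
      apply Set.ncard_union_eq _ (Set.toFinite _) (Set.toFinite _)
      exact Set.disjoint_left.mpr (fun w hw hw2 => hw2.2.2.1 hw)
    have hSu_unm : ∀ w ∈ Su, ∀ l, ¬matchedAt E l w := fun w hw => hT_unm _ w hw.1
    have hSv_unm : ∀ w ∈ Sv, ∀ l, ¬matchedAt E l w := fun w hw => hT_unm _ w hw.1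
    have hTu_unm : ∀ w ∈ Tu, ∀ l, ¬matchedAt E l w := fun w hw => hT_unm _ w hw
    have hTv_unm : ∀ w ∈ Tv, ∀ l, ¬matchedAt E l w := fun w hw => hT_unm _ w hw
    have hU2 : Tu.ncard + Su.ncard + 2 ≤ Δ := by
      have hb := ncard_pair_le hadj_i hmu_adj (fun h => hmune h.symm) (s := Tu ∪ Su)
        ?_ (Set.toFinite _)
      · rw [hTuSu] at hb
        exact le_trans hb (hdeg_le i (le_of_lt hik) _)
      · intro w hw
        rcases hw with hw | hw
        · exact hTu_sub hw
        · refine ⟨hw.2.2.2.2.2, ?_⟩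
          simp only [Set.mem_insert_iff, Set.mem_singleton_iff, not_or]
          exact ⟨fun h => hSu_unm w hw i (h ▸ hmv), hw.2.2.2.1⟩
    have hU3 : E.sel (i+1) ≠ p c → Tu.ncard + Su.ncard + 3 ≤ Δ := by
      intro hne
      have hb := ncard_triple_le hadj_i hmu_adj hu'u (fun h => hmune h.symm) hvu' hne.symm
        (s := Tu ∪ Su) ?_ (Set.toFinite _)
      · rw [hTuSu] at hb
        exact le_trans hb (hdeg_le i (le_of_lt hik) _)
      · intro w hw
        have hmem : w ∈ (E.Gs i).neighborSet (E.sel i) ∧ w ≠ E.oth i ∧ w ≠ p c := by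
          rcases hw with hw | hw
          · obtain ⟨hN, hnot⟩ := hTu_sub hw
            simp only [Set.mem_insert_iff, Set.mem_singleton_iff, not_or] at hnot
            exact ⟨hN, hnot.1, hnot.2⟩
          · exact ⟨hw.2.2.2.2.2, fun h => hSu_unm w hw i (h ▸ hmv), hw.2.2.2.1⟩
        have hwun : ∀ l, ¬matchedAt E l w := by
          rcases hw with hw | hw
          · exact hTu_unm w hw
          · exact hSu_unm w hw
        refine ⟨hmem.1, ?_⟩
        simp only [Set.mem_insert_iff, Set.mem_singleton_iff, not_or]
        exact ⟨hmem.2.1, hmem.2.2, fun h => hwun (i+1) (h ▸ hmu')⟩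
    have hSv_adj : ∀ w ∈ Sv, (E.Gs i).Adj (E.oth i) w := by
      intro w hw
      rcases hSmid w hw.1 with h | h
      · exact absurd h hw.2.2.2.2.2
      · exact h
    have hV2 : Tv.ncard + Sv.ncard + 2 ≤ Δ := by
      have hb := ncard_pair_le hadj_i.symm hmv_adj (fun h => hmvne h.symm) (s := Tv ∪ Sv)
        ?_ (Set.toFinite _)
      · rw [hTvSv] at hb
        exact le_trans hb (hdeg_le i (le_of_lt hik) _)
      · intro w hw
        rcases hw with hw | hw
        · exact hTv_sub hw
        · refine ⟨hSv_adj w hw, ?_⟩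
          simp only [Set.mem_insert_iff, Set.mem_singleton_iff, not_or]
          exact ⟨fun h => hSv_unm w hw i (h ▸ hmu), hw.2.2.2.2.1⟩
    have hV3 : E.sel (i+1) ≠ p d → Tv.ncard + Sv.ncard + 3 ≤ Δ := by
      intro hne
      have hb := ncard_triple_le hadj_i.symm hmv_adj hu'v (fun h => hmvne h.symm) huu' hne.symm
        (s := Tv ∪ Sv) ?_ (Set.toFinite _)
      · rw [hTvSv] at hb
        exact le_trans hb (hdeg_le i (le_of_lt hik) _)
      · intro w hw
        have hmem : w ∈ (E.Gs i).neighborSet (E.oth i) ∧ w ≠ E.sel i ∧ w ≠ p d := by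
          rcases hw with hw | hw
          · obtain ⟨hN, hnot⟩ := hTv_sub hw
            simp only [Set.mem_insert_iff, Set.mem_singleton_iff, not_or] at hnot
            exact ⟨hN, hnot.1, hnot.2⟩
          · exact ⟨hSv_adj w hw, fun h => hSv_unm w hw i (h ▸ hmu), hw.2.2.2.2.1⟩
        have hwun : ∀ l, ¬matchedAt E l w := by
          rcases hw with hw | hw
          · exact hTv_unm w hw
          · exact hSv_unm w hw
        refine ⟨hmem.1, ?_⟩
        simp only [Set.mem_insert_iff, Set.mem_singleton_iff, not_or]
        exact ⟨hmem.2.1, hmem.2.2, fun h => hwun (i+1) (h ▸ hmu')⟩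
    have hTv'_unm : ∀ w ∈ Tv', ∀ l, ¬matchedAt E l w := fun w hw => hT_unm _ w hw
    have hE2 : ({p c, p d} ∩ Tv').ncard ≤ 2 := by
      calc ({p c, p d} ∩ Tv').ncard ≤ ({p c, p d} : Set V).ncard :=
            Set.ncard_le_ncard Set.inter_subset_left (Set.toFinite _)
        _ ≤ 2 := by
            apply le_trans (Set.ncard_insert_le _ _)
            rw [Set.ncard_singleton]
    have hEc : E.sel (i+1) = p c → ({p c, p d} ∩ Tv').ncard ≤ 1 := by
      intro h
      have hsub : ({p c, p d} ∩ Tv') ⊆ {p d} := by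
        rintro w ⟨hpair, hTv'w⟩
        rcases hpair with h1 | h1
        · exfalso
          exact hTv'_unm w hTv'w (i+1) ((h1.trans h.symm) ▸ hmu')
        · exact h1
      calc _ ≤ ({p d} : Set V).ncard := Set.ncard_le_ncard hsub (Set.toFinite _)
        _ = 1 := Set.ncard_singleton _
    have hEd : E.sel (i+1) = p d → ({p c, p d} ∩ Tv').ncard ≤ 1 := by
      intro h
      have hsub : ({p c, p d} ∩ Tv') ⊆ {p c} := by
        rintro w ⟨hpair, hTv'w⟩
        rcases hpair with h1 | h1
        · exact h1
        · exfalso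
          have h1 : w = p d := h1
          exact hTv'_unm w hTv'w (i+1) ((h1.trans h.symm) ▸ hmu')
      calc _ ≤ ({p c} : Set V).ncard := Set.ncard_le_ncard hsub (Set.toFinite _)
        _ = 1 := Set.ncard_singleton _
    by_cases hc1 : E.sel (i+1) = p c
    · by_cases hc2 : E.sel (i+1) = p d
      · -- p c = p d = sel (i+1) : but then p c is matched, and the intersection is empty
        have hsub : ({p c, p d} ∩ Tv') ⊆ (∅ : Set V) := by
          rintro w ⟨hpair, hTv'w⟩
          rcases hpair with h1 | h1
          · exact absurd ((h1.trans hc1.symm) ▸ hmu') (hTv'_unm w hTv'w (i+1))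
          · have h1 : w = p d := h1
            exact absurd ((h1.trans hc2.symm) ▸ hmu') (hTv'_unm w hTv'w (i+1))
        have hE0 : ({p c, p d} ∩ Tv').ncard = 0 := by
          rw [Set.eq_empty_of_subset_empty hsub, Set.ncard_empty]
        omega
      · have := hV3 hc2
        have := hEc hc1
        omega
    · by_cases hc2 : E.sel (i+1) = p d
      · have := hU3 hc1
        have := hEd hc2
        omega
      · have := hU3 hc1
        have := hV3 hc2
        omega

end

end MinGreedy
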